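/- For all integers h ≥ 1 and rational x, the quotient of polynomials P₂_h(x,z)/Q₂_h(x,z) has formal power series coefficients [z^n] equal to C(x, n) for all 0 ≤ n ≤ h, where P₂_h(x,z) = Σ_{n=0}^{h-1} C(x+h, n)·C(h-1, n)/C(2h-1, n)·z^n and Q₂_h(x,z) = Σ_{i=0}^{h} C(x-h+i, i)·(h!/(h-i)!)·((2h-1-i)!/(2h-1)!)·(-z)^i. -/

import Mathlib

/-- Generalized binomial coefficient `C(x, k) = x(x-1)⋯(x-k+1)/k!` for rational `x`. -/
noncomputable def gchoose (x : ℚ) (k : ℕ) : ℚ :=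
  (∏ i ∈ Finset.range k, (x - i)) / (Nat.factorial k)

/-- The numerator power series
`P₂_h(x, z) = Σ_{n=0}^{h-1} C(x+h, n) C(h-1, n) / C(2h-1, n) z^n`. -/
noncomputable def P2ser (x : ℚ) (h : ℕ) : PowerSeries ℚ :=
  PowerSeries.mk fun n =>
    if n < h then gchoose (x + h) n * gchoose ((h : ℚ) - 1) n / gchoose (2 * (h : ℚ) - 1) n
    else 0

/-- The denominator power series
`Q₂_h(x, z) = Σ_{i=0}^{h} C(x-h+i, i) (h!/(h-i)!) ((2h-1-i)!/(2h-1)!) (-z)^i`. -/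
noncomputable def Q2ser (x : ℚ) (h : ℕ) : PowerSeries ℚ :=
  PowerSeries.mk fun i =>
    if i ≤ h then
      (-1 : ℚ) ^ i * gchoose (x - h + i) i *
        ((Nat.factorial h : ℚ) / (Nat.factorial (h - i) : ℚ)) *
        ((Nat.factorial (2 * h - 1 - i) : ℚ) / (Nat.factorial (2 * h - 1) : ℚ))
    else 0

/-!
Multiplying through by `Q₂_h`, it suffices that `Q₂_h(x, z) · Σₙ C(x, n) zⁿ` agrees with
`P₂_h(x, z)` up to `z^h`. The `n`-th coefficient of that product is a hypergeometric sum
`Sₙ = Σᵢ qᵢ C(x, n - i)`, and a Wilf–Zeilberger certificate shows that `Sₙ` satisfies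
`(2h-1-n)(n+1) Sₙ₊₁ = (x+h-n)(h-1-n) Sₙ`, the first-order recurrence of the coefficients of
`P₂_h`; the two sequences start at `1` and so agree for `n ≤ h`
(at `n = h` both vanish because `C(h-1, h) = 0`).
-/

open PowerSeries Finset

namespace PowerSeries

theorem coeff_mul_inv_eq_of_coeff_eq_coeff_mul {k : Type*} [Field k] {P Q B : k⟦X⟧} {N n : ℕ}
    (hQ : constantCoeff Q ≠ 0) (hPQ : ∀ m ≤ N, coeff m P = coeff m (Q * B)) (hn : n ≤ N) :
    coeff n (P * Q⁻¹) = coeff n B := by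
  have hdvd : X ^ (N + 1) ∣ P - Q * B :=
    X_pow_dvd_iff.mpr fun m hm => by rw [map_sub, hPQ m (by omega), sub_self]
  have hsplit : P * Q⁻¹ = B + (P - Q * B) * Q⁻¹ := by
    rw [sub_mul, mul_comm Q B, mul_assoc, PowerSeries.mul_inv_cancel Q hQ]
    ring
  rw [hsplit, map_add, X_pow_dvd_iff.mp (dvd_mul_of_dvd_left hdvd _) n (by omega), add_zero]

end PowerSeries

theorem gchoose_zero (x : ℚ) : gchoose x 0 = 1 := by
  simp [gchoose]

theorem gchoose_succ (x : ℚ) (k : ℕ) : gchoose x (k + 1) = gchoose x k * (x - k) / (k + 1) := by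
  rw [gchoose, gchoose, prod_range_succ, Nat.factorial_succ]
  push_cast
  field_simp

theorem gchoose_add_one_succ (y : ℚ) (k : ℕ) :
    gchoose (y + 1) (k + 1) = gchoose y k * (y + 1) / (k + 1) := by
  rw [gchoose, gchoose, prod_range_succ', Nat.factorial_succ]
  push_cast
  simp only [add_sub_add_right_eq_sub, sub_zero]
  field_simp

theorem gchoose_natCast (m k : ℕ) : gchoose m k = m.descFactorial k / k.factorial := by
  rw [gchoose, ← descPochhammer_eval_eq_prod_range, descPochhammer_eval_eq_descFactorial]

theorem gchoose_natCast_sub_one_self {h : ℕ} (hh : 1 ≤ h) : gchoose ((h : ℚ) - 1) h = 0 := by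
  rw [← Nat.cast_pred hh, gchoose_natCast, Nat.descFactorial_of_lt (by omega), Nat.cast_zero,
    zero_div]

theorem gchoose_two_mul_sub_one_ne_zero {h i : ℕ} (hi : i ≤ h) :
    gchoose (2 * (h : ℚ) - 1) i ≠ 0 := by
  refine div_ne_zero (prod_ne_zero_iff.mpr fun j hj => ?_) (by positivity)
  have : (j : ℚ) + 1 ≤ h := by exact_mod_cast (mem_range.mp hj).trans_le hi
  linarith

theorem factorial_ratio_eq_gchoose_div {h i : ℕ} (hh : 1 ≤ h) (hi : i ≤ h) :
    ((h.factorial : ℚ) / (h - i).factorial) *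
        ((2 * h - 1 - i).factorial / (2 * h - 1).factorial : ℚ) =
      gchoose h i / gchoose (2 * (h : ℚ) - 1) i := by
  have hcast : (2 * (h : ℚ) - 1) = ((2 * h - 1 : ℕ) : ℚ) := by
    rw [Nat.cast_sub (by omega)]
    push_cast
    ring
  rw [hcast, gchoose_natCast, gchoose_natCast,
    ← Nat.factorial_mul_descFactorial hi,
    ← Nat.factorial_mul_descFactorial (by omega : i ≤ 2 * h - 1)]
  have : ((2 * h - 1).descFactorial i : ℚ) ≠ 0 :=
    Nat.cast_ne_zero.mpr (Nat.descFactorial_pos.mpr (by omega)).ne'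
  push_cast
  field_simp

section Coefficients

variable (x : ℚ) (h : ℕ)

noncomputable def q2Coeff (i : ℕ) : ℚ :=
  (-1) ^ i * gchoose (x - h + i) i * gchoose h i / gchoose (2 * (h : ℚ) - 1) i

noncomputable def p2Coeff (n : ℕ) : ℚ :=
  gchoose (x + h) n * gchoose ((h : ℚ) - 1) n / gchoose (2 * (h : ℚ) - 1) n

noncomputable def convTerm (n i : ℕ) : ℚ :=
  q2Coeff x h i * gchoose x (n - i)

noncomputable def convSum (n : ℕ) : ℚ :=
  ∑ i ∈ range (n + 1), convTerm x h n i

/-- The Wilf–Zeilberger certificate of the recurrence `convSum_succ`. -/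
noncomputable def wzCert (n i : ℕ) : ℚ :=
  -(i * (2 * h - i)) * convTerm x h (n + 1) i

variable {x h}

theorem two_mul_sub_one_sub_ne_zero {n : ℕ} (hn : n < h) : 2 * (h : ℚ) - 1 - n ≠ 0 := by
  have : (n : ℚ) + 1 ≤ h := by exact_mod_cast hn
  linarith

theorem q2Coeff_succ {i : ℕ} (hi : i < h) :
    q2Coeff x h (i + 1) * ((i + 1) * (2 * h - 1 - i)) =
      -q2Coeff x h i * ((x - h + i + 1) * (h - i)) := by
  have hx : x - h + ((i + 1 : ℕ) : ℚ) = (x - h + i) + 1 := by push_cast; ring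
  have := gchoose_two_mul_sub_one_ne_zero hi.le
  have := two_mul_sub_one_sub_ne_zero hi
  rw [q2Coeff, q2Coeff, hx, gchoose_add_one_succ, gchoose_succ (h : ℚ),
    gchoose_succ (2 * (h : ℚ) - 1)]
  generalize 2 * (h : ℚ) - 1 - i = d at *
  field_simp
  ring

theorem p2Coeff_succ {n : ℕ} (hn : n < h) :
    p2Coeff x h (n + 1) * ((2 * h - 1 - n) * (n + 1)) =
      p2Coeff x h n * ((x + h - n) * (h - 1 - n)) := by
  have := gchoose_two_mul_sub_one_ne_zero hn.le
  have := two_mul_sub_one_sub_ne_zero hn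
  rw [p2Coeff, p2Coeff, gchoose_succ (x + h), gchoose_succ ((h : ℚ) - 1),
    gchoose_succ (2 * (h : ℚ) - 1)]
  generalize 2 * (h : ℚ) - 1 - n = d at *
  field_simp

theorem wz_step {n i : ℕ} (hn : n < h) (hi : i ≤ n) :
    (2 * h - 1 - n) * (n + 1) * convTerm x h (n + 1) i -
        (x + h - n) * (h - 1 - n) * convTerm x h n i =
      wzCert x h n (i + 1) - wzCert x h n i := by
  obtain ⟨m, rfl⟩ : ∃ m, n = i + m := ⟨n - i, by omega⟩
  simp only [wzCert, convTerm]
  rw [show i + m + 1 - i = m + 1 by omega, show i + m + 1 - (i + 1) = m by omega,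
    Nat.add_sub_cancel_left, gchoose_succ x m]
  have : (m : ℚ) + 1 ≠ 0 := by positivity
  push_cast
  field_simp
  linear_combination (gchoose x m * (m + 1)) * q2Coeff_succ (x := x) (h := h) (i := i) (by omega)

theorem convSum_succ (n : ℕ) (hn : n < h) :
    (2 * h - 1 - n) * (n + 1) * convSum x h (n + 1) =
      (x + h - n) * (h - 1 - n) * convSum x h n := by
  have htelescope := sum_range_sub (wzCert x h n) (n + 1)
  rw [← sum_congr rfl fun i hi => wz_step hn (Nat.lt_succ_iff.mp (mem_range.mp hi)),
    sum_sub_distrib, ← mul_sum, ← mul_sum] at htelescope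
  rw [convSum, sum_range_succ, convSum]
  simp only [wzCert, CharP.cast_eq_zero, zero_mul, neg_zero] at htelescope
  push_cast at htelescope
  linear_combination htelescope

theorem convSum_eq_p2Coeff {n : ℕ} (hn : n ≤ h) : convSum x h n = p2Coeff x h n := by
  induction n with
  | zero => simp [convSum, convTerm, p2Coeff, q2Coeff, gchoose_zero]
  | succ n ih =>
    have hne : (2 * h - 1 - n : ℚ) * (n + 1) ≠ 0 :=
      mul_ne_zero (two_mul_sub_one_sub_ne_zero hn) (by positivity)
    apply mul_left_cancel₀ hne
    rw [convSum_succ n hn, ih (by omega), mul_comm _ (p2Coeff x h (n + 1)), p2Coeff_succ hn]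
    ring

theorem coeff_Q2ser (hh : 1 ≤ h) {i : ℕ} (hi : i ≤ h) :
    coeff i (Q2ser x h) = q2Coeff x h i := by
  rw [Q2ser, coeff_mk, if_pos hi, mul_assoc, factorial_ratio_eq_gchoose_div hh hi, q2Coeff]
  ring

theorem coeff_P2ser (hh : 1 ≤ h) {n : ℕ} (hn : n ≤ h) :
    coeff n (P2ser x h) = p2Coeff x h n := by
  rw [P2ser, coeff_mk, p2Coeff]
  rcases hn.lt_or_eq with hlt | rfl
  · rw [if_pos hlt]
  · rw [if_neg (lt_irrefl _), gchoose_natCast_sub_one_self hh, mul_zero, zero_div]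

theorem coeff_Q2ser_mul_gchoose (hh : 1 ≤ h) {n : ℕ} (hn : n ≤ h) :
    coeff n (Q2ser x h * mk (gchoose x)) = convSum x h n := by
  rw [coeff_mul, Nat.sum_antidiagonal_eq_sum_range_succ_mk, convSum]
  refine sum_congr rfl fun i hi => ?_
  rw [coeff_Q2ser hh ((Nat.lt_succ_iff.mp (mem_range.mp hi)).trans hn), coeff_mk, convTerm]

end Coefficients

theorem stmt13 (h : ℕ) (hh : 1 ≤ h) (x : ℚ) (n : ℕ) (hn : n ≤ h) :
    PowerSeries.coeff n (P2ser x h * (Q2ser x h)⁻¹) = gchoose x n := by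
  have hQ : constantCoeff (Q2ser x h) ≠ 0 := by
    rw [← coeff_zero_eq_constantCoeff_apply, coeff_Q2ser hh (Nat.zero_le h)]
    simp [q2Coeff, gchoose_zero]
  have hPQ : ∀ m ≤ h, coeff m (P2ser x h) = coeff m (Q2ser x h * mk (gchoose x)) := by
    intro m hm
    rw [coeff_P2ser hh hm, coeff_Q2ser_mul_gchoose hh hm, convSum_eq_p2Coeff hm]
  rw [coeff_mul_inv_eq_of_coeff_eq_coeff_mul hQ hPQ hn, coeff_mk]
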